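/- arXiv:2311.18370 — 4 statements merged into one kernel-verified Lean document; each statement's English description precedes it below -/
import Mathlib

section
/- Let F : ℝ^n ⇉ ℝ^m be a set-valued mapping with closed graph and ȳ ∈ J(F). If there exist constants R > 0, ℓ > 0 and a neighborhood V of ȳ such that F⁻¹(y') ∩ (ℝ^n \ 𝔹_R) ⊆ F⁻¹(y) + ℓ‖y' − y‖𝔹 for all y, y' ∈ V, then ker D*F(∞, ȳ) = {0}, i.e., the only v ∈ ℝ^m with 0 ∈ D*F(∞, ȳ)(v) is v = 0. -/
open Filter Topology Set Metric Pointwise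
open scoped RealInnerProductSpace ENNReal

noncomputable section

variable {E F G : Type*}
  [NormedAddCommGroup E] [InnerProductSpace ℝ E]
  [NormedAddCommGroup F] [InnerProductSpace ℝ F]
  [NormedAddCommGroup G] [InnerProductSpace ℝ G]

/-- The regular (Fréchet) normal cone to a subset of a product of inner product
spaces, at a point `p` (empty if `p ∉ Ω`). -/
def frechetNormalCone2 (Ω : Set (E × F)) (p : E × F) : Set (E × F) :=
  {ξ | p ∈ Ω ∧ ∀ ε > (0:ℝ), ∀ᶠ q in nhdsWithin p Ω,
      ⟪ξ.1, q.1 - p.1⟫ + ⟪ξ.2, q.2 - p.2⟫ ≤ ε * ‖q - p‖}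

/-- The limiting (Mordukhovich) normal cone. -/
def limitingNormalCone2 (Ω : Set (E × F)) (p : E × F) : Set (E × F) :=
  {ξ | ∃ pk : ℕ → E × F, ∃ ξk : ℕ → E × F,
    (∀ k, pk k ∈ Ω) ∧ Tendsto pk atTop (𝓝 p) ∧
    (∀ k, ξk k ∈ frechetNormalCone2 Ω (pk k)) ∧ Tendsto ξk atTop (𝓝 ξ)}

/-- The normal cone to `Ω ⊆ E × F` at `(∞, ȳ)`. -/
def normalConeAtInfty (Ω : Set (E × F)) (ybar : F) : Set (E × F) :=
  {ξ | ∃ pk : ℕ → E × F, ∃ ξk : ℕ → E × F,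
    (∀ k, pk k ∈ Ω) ∧ Tendsto (fun k => ‖(pk k).1‖) atTop atTop ∧
    Tendsto (fun k => (pk k).2) atTop (𝓝 ybar) ∧
    (∀ k, ξk k ∈ frechetNormalCone2 Ω (pk k)) ∧ Tendsto ξk atTop (𝓝 ξ)}

/-- `Ω ⊆ E × F` is locally closed at `(∞, ȳ)`. -/
def LocallyClosedAtInfty (Ω : Set (E × F)) (ybar : F) : Prop :=
  ∃ R > (0:ℝ), ∃ V ∈ 𝓝 ybar, IsClosed V ∧
    IsClosed (Ω ∩ {p : E × F | R ≤ ‖p.1‖ ∧ p.2 ∈ V})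

/-- Graph of a set-valued mapping. -/
def svGraph (S : E → Set F) : Set (E × F) := {p | p.2 ∈ S p.1}

/-- Jelonek set of a set-valued mapping. -/
def jelonek (S : E → Set F) : Set F :=
  {y | ∃ xk : ℕ → E, ∃ yk : ℕ → F,
    Tendsto (fun k => ‖xk k‖) atTop atTop ∧ (∀ k, yk k ∈ S (xk k)) ∧
    Tendsto yk atTop (𝓝 y)}

/-- Coderivative of a set-valued mapping at a point of its graph. -/
def coderiv (S : E → Set F) (x : E) (y : F) (v : F) : Set E :=
  {u | (u, -v) ∈ limitingNormalCone2 (svGraph S) (x, y)}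

/-- Coderivative of a set-valued mapping at `(∞, ȳ)`. -/
def coderivAtInfty (S : E → Set F) (ybar : F) (v : F) : Set E :=
  {u | (u, -v) ∈ normalConeAtInfty (svGraph S) ybar}

/-- Regular normal cone, one-space version. -/
def frechetNormalCone1 (Ω : Set E) (x : E) : Set E :=
  {ξ | x ∈ Ω ∧ ∀ ε > (0:ℝ), ∀ᶠ x' in nhdsWithin x Ω, ⟪ξ, x' - x⟫ ≤ ε * ‖x' - x‖}

/-- Normal cone at infinity to an unbounded subset of `E`. -/
def normalConeAtInfty1 (Ω : Set E) : Set E :=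
  {ξ | ∃ xk : ℕ → E, ∃ ξk : ℕ → E, (∀ k, xk k ∈ Ω) ∧
    Tendsto (fun k => ‖xk k‖) atTop atTop ∧
    (∀ k, ξk k ∈ frechetNormalCone1 Ω (xk k)) ∧ Tendsto ξk atTop (𝓝 ξ)}

/-- Epigraph of an extended-real-valued function. -/
def epiSet (f : E → EReal) : Set (E × ℝ) := {p | f p.1 ≤ (p.2 : EReal)}

/-- Graph of an extended-real-valued function, as a subset of `E × ℝ`. -/
def gphFun (f : E → EReal) : Set (E × ℝ) := {p | f p.1 = (p.2 : EReal)}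

/-- Jelonek set of a function. -/
def jelonekFun (f : E → EReal) : Set ℝ :=
  {y | ∃ xk : ℕ → E, Tendsto (fun k => ‖xk k‖) atTop atTop ∧
    Tendsto (fun k => f (xk k)) atTop (𝓝 (y : EReal))}

/-- Limiting subdifferential of `f` at `x` (empty outside `dom f`). -/
def limSubdiff (f : E → EReal) (x : E) : Set E :=
  {u | ∃ r : ℝ, f x = (r : EReal) ∧
    (u, (-1 : ℝ)) ∈ limitingNormalCone2 (epiSet f) (x, r)}

/-- Limiting subdifferential of `f` at `(∞, ȳ)`. -/
def limSubdiffAtInfty (f : E → EReal) (ybar : ℝ) : Set E :=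
  {u | (u, (-1 : ℝ)) ∈ normalConeAtInfty (epiSet f) ybar}

/-- Singular subdifferential of `f` at `(∞, ȳ)`. -/
def singSubdiffAtInfty (f : E → EReal) (ybar : ℝ) : Set E :=
  {u | (u, (0 : ℝ)) ∈ normalConeAtInfty (epiSet f) ybar}

/-- Inverse of a set-valued mapping. -/
def svInv (S : E → Set F) (y : F) : Set E := {x | y ∈ S x}

/-- Preimage `F⁻¹(V) = {x : F(x) ∩ V ≠ ∅}`. -/
def svPreimage (S : E → Set F) (V : Set F) : Set E := {x | (S x ∩ V).Nonempty}

/-- Distance function of a set-valued mapping, with value `+∞` on empty values. -/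
def dSV (S : E → Set F) (p : E × F) : EReal :=
  ((EMetric.infEdist p.2 (S p.1) : ℝ≥0∞) : EReal)

/-- Regular normal cone on `(E × F) × ℝ`. -/
def frechetNormalCone3 (Ω : Set ((E × F) × ℝ)) (p : (E × F) × ℝ) : Set ((E × F) × ℝ) :=
  {ξ | p ∈ Ω ∧ ∀ ε > (0:ℝ), ∀ᶠ q in nhdsWithin p Ω,
      ⟪ξ.1.1, q.1.1 - p.1.1⟫ + ⟪ξ.1.2, q.1.2 - p.1.2⟫ + ξ.2 * (q.2 - p.2)
        ≤ ε * ‖q - p‖}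

/-- Limiting normal cone on `(E × F) × ℝ`. -/
def limitingNormalCone3 (Ω : Set ((E × F) × ℝ)) (p : (E × F) × ℝ) : Set ((E × F) × ℝ) :=
  {ξ | ∃ pk ξk : ℕ → (E × F) × ℝ, (∀ k, pk k ∈ Ω) ∧ Tendsto pk atTop (𝓝 p) ∧
    (∀ k, ξk k ∈ frechetNormalCone3 Ω (pk k)) ∧ Tendsto ξk atTop (𝓝 ξ)}

/-- Limiting subdifferential of the distance function `d_F`. -/
def limSubdiffD (S : E → Set F) (p : E × F) : Set (E × F) :=
  {w | ∃ r : ℝ, dSV S p = (r : EReal) ∧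
    (w, (-1 : ℝ)) ∈ limitingNormalCone3 {q : (E × F) × ℝ | dSV S q.1 ≤ (q.2 : EReal)} (p, r)}

/-- The set `J⁺(F₁ + F₂, y)`. -/
def jplus (S₁ S₂ : E → Set F) (y : F) : Set (F × F) :=
  {q | ∃ xk : ℕ → E, ∃ y1k y2k : ℕ → F,
    Tendsto (fun k => ‖xk k‖) atTop atTop ∧
    (∀ k, y1k k ∈ S₁ (xk k)) ∧ (∀ k, y2k k ∈ S₂ (xk k)) ∧
    Tendsto y1k atTop (𝓝 q.1) ∧ Tendsto y2k atTop (𝓝 q.2) ∧ q.1 + q.2 = y}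

/-- The set `J°(F₂ ∘ F₁, y)`. -/
def jcirc (S₁ : E → Set G) (S₂ : G → Set F) (y : F) : Set G :=
  {z | ∃ xk : ℕ → E, ∃ zk : ℕ → G, ∃ yk : ℕ → F,
    Tendsto (fun k => ‖xk k‖) atTop atTop ∧ (∀ k, zk k ∈ S₁ (xk k)) ∧
    (∀ k, yk k ∈ S₂ (zk k)) ∧ Tendsto zk atTop (𝓝 z) ∧ Tendsto yk atTop (𝓝 y)}

/-- Composition `F₂ ∘ F₁` of set-valued mappings. -/
def svComp (S₂ : G → Set F) (S₁ : E → Set G) (x : E) : Set F :=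
  {y | ∃ z ∈ S₁ x, y ∈ S₂ z}

abbrev Eucl (n : ℕ) := EuclideanSpace ℝ (Fin n)

/-!
If `(u, w)` is a Fréchet normal to the graph at `(x, y)` and the Lipschitz-like estimate holds
around `(x, y)`, testing the normal inequality at graph points `(x', y + t • w)` with
`‖x' - x‖ ≤ ℓ t ‖w‖` and letting `t → 0⁺` gives `‖w‖ ≤ ℓ ‖u‖`. Far out and near `ȳ` this holds
uniformly, so it passes to the limits defining the normal cone at `(∞, ȳ)`; for `(0, -v)` it
forces `v = 0`. Conversely `ȳ ∈ J(F)` makes `(0, 0)` such a limit.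
-/

theorem zero_mem_frechetNormalCone2 {Ω : Set (E × F)} {p : E × F} (hp : p ∈ Ω) :
    (0 : E × F) ∈ frechetNormalCone2 Ω p :=
  ⟨hp, fun ε hε => Eventually.of_forall fun q => by
    simpa using mul_nonneg hε.le (norm_nonneg (q - p))⟩

theorem zero_mem_normalConeAtInfty_svGraph {S : E → Set F} {ybar : F} (h : ybar ∈ jelonek S) :
    (0 : E × F) ∈ normalConeAtInfty (svGraph S) ybar := by
  obtain ⟨xk, yk, hxk, hyk, hylim⟩ := h
  exact ⟨fun k => (xk k, yk k), 0, hyk, hxk, hylim,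
    fun k => zero_mem_frechetNormalCone2 (hyk k), tendsto_const_nhds⟩

theorem norm_le_add_of_mem_frechetNormalCone2_svGraph {S : E → Set F} {x : E} {y : F} {ℓ ε : ℝ}
    (hℓ : 0 ≤ ℓ) (hε : 0 < ε)
    (hS : ∀ᶠ y' in 𝓝 y, x ∈ svInv S y' + closedBall (0 : E) (ℓ * ‖y - y'‖))
    {u : E} {w : F} (hξ : (u, w) ∈ frechetNormalCone2 (svGraph S) (x, y)) :
    ‖w‖ ≤ ℓ * ‖u‖ + ε * (ℓ + 1) := by
  rcases eq_or_ne w 0 with rfl | hw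
  · rw [norm_zero]; positivity
  have hw : 0 < ‖w‖ := norm_pos_iff.mpr hw
  obtain ⟨δ, hδ, hball⟩ := Metric.mem_nhdsWithin_iff.mp (hξ.2 ε hε)
  have hline : Tendsto (fun t : ℝ => y + t • w) (𝓝[>] 0) (𝓝 y) :=
    (Continuous.tendsto' (by fun_prop) 0 y (by simp)).mono_left nhdsWithin_le_nhds
  have hsmall : ∀ᶠ t : ℝ in 𝓝[>] 0, (ℓ + 1) * (t * ‖w‖) < δ :=
    ((Continuous.tendsto' (by fun_prop) 0 0 (by simp)).mono_left nhdsWithin_le_nhds).eventually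
      (gt_mem_nhds hδ)
  obtain ⟨t, ⟨hSt, hδt⟩, ht : 0 < t⟩ :=
    ((hline.eventually hS).and hsmall).and self_mem_nhdsWithin |>.exists
  obtain ⟨x', hx', b, hb, rfl⟩ := hSt
  have hdy : ‖y - (y + t • w)‖ = t * ‖w‖ := by simp [norm_smul, abs_of_pos ht]
  rw [mem_closedBall_zero_iff, hdy] at hb
  have hdist : ‖((x', y + t • w) : E × F) - (x' + b, y)‖ ≤ (ℓ + 1) * (t * ‖w‖) := by
    refine (norm_prod_le_iff).mpr ⟨?_, ?_⟩ <;> simp only [Prod.fst_sub, Prod.snd_sub]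
    · rw [sub_add_cancel_left, norm_neg]; nlinarith [mul_pos ht hw]
    · rw [add_sub_cancel_left, norm_smul, Real.norm_of_nonneg ht.le]; nlinarith [mul_pos ht hw]
  have hfrechet : ⟪u, x' - (x' + b)⟫ + ⟪w, y + t • w - y⟫
      ≤ ε * ‖((x', y + t • w) : E × F) - (x' + b, y)‖ :=
    hball ⟨mem_ball_iff_norm.mpr (hdist.trans_lt hδt), hx'⟩
  have hinner_u : -(‖u‖ * (ℓ * (t * ‖w‖))) ≤ ⟪u, x' - (x' + b)⟫ := by
    rw [sub_add_cancel_left, inner_neg_right, neg_le_neg_iff]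
    exact (real_inner_le_norm u b).trans (mul_le_mul_of_nonneg_left hb (norm_nonneg u))
  have hinner_w : ⟪w, y + t • w - y⟫ = t * ‖w‖ ^ 2 := by
    rw [add_sub_cancel_left, real_inner_smul_right, real_inner_self_eq_norm_sq]
  have key : t * ‖w‖ * ‖w‖ ≤ t * ‖w‖ * (ℓ * ‖u‖ + ε * (ℓ + 1)) := by
    nlinarith [mul_le_mul_of_nonneg_left hdist hε.le]
  exact le_of_mul_le_mul_left key (mul_pos ht hw)

theorem norm_le_of_mem_frechetNormalCone2_svGraph {S : E → Set F} {x : E} {y : F} {ℓ : ℝ}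
    (hℓ : 0 ≤ ℓ) (hS : ∀ᶠ y' in 𝓝 y, x ∈ svInv S y' + closedBall (0 : E) (ℓ * ‖y - y'‖))
    {u : E} {w : F} (hξ : (u, w) ∈ frechetNormalCone2 (svGraph S) (x, y)) :
    ‖w‖ ≤ ℓ * ‖u‖ := by
  refine le_of_forall_pos_le_add fun ε hε => ?_
  have hℓ1 : 0 < ℓ + 1 := by positivity
  have h := norm_le_add_of_mem_frechetNormalCone2_svGraph (ε := ε / (ℓ + 1)) hℓ
    (div_pos hε hℓ1) hS hξ
  rwa [div_mul_cancel₀ ε hℓ1.ne'] at h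

theorem norm_snd_le_of_mem_normalConeAtInfty {Ω : Set (E × F)} {ybar : F} {R ℓ : ℝ}
    {V : Set F} (hV : V ∈ 𝓝 ybar)
    (hbound : ∀ p ∈ Ω, R < ‖p.1‖ → p.2 ∈ V →
      ∀ ξ ∈ frechetNormalCone2 Ω p, ‖ξ.2‖ ≤ ℓ * ‖ξ.1‖)
    {ξ : E × F} (hξ : ξ ∈ normalConeAtInfty Ω ybar) : ‖ξ.2‖ ≤ ℓ * ‖ξ.1‖ := by
  obtain ⟨pk, ξk, hpk, hnorm, hy, hξk, hlim⟩ := hξ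
  have hev : ∀ᶠ k in atTop, ‖(ξk k).2‖ ≤ ℓ * ‖(ξk k).1‖ := by
    filter_upwards [hnorm.eventually_gt_atTop R, hy hV] with k hR hyV
    exact hbound _ (hpk k) hR hyV _ (hξk k)
  exact le_of_tendsto_of_tendsto hlim.snd_nhds.norm (hlim.fst_nhds.norm.const_mul ℓ) hev

theorem stmt13_general {n m : ℕ} (S : Eucl n → Set (Eucl m))
    (ybar : Eucl m) (hJ : ybar ∈ jelonek S)
    (hlip : ∃ R > (0:ℝ), ∃ ℓ > (0:ℝ), ∃ V ∈ 𝓝 ybar,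
      ∀ y ∈ V, ∀ y' ∈ V, ∀ x ∈ svInv S y', R < ‖x‖ →
        x ∈ svInv S y + closedBall (0 : Eucl n) (ℓ * ‖y' - y‖)) :
    {v : Eucl m | (0 : Eucl n) ∈ coderivAtInfty S ybar v} = {0} := by
  obtain ⟨R, -, ℓ, hℓ, V, hV, hlipV⟩ := hlip
  have hbound : ∀ p ∈ svGraph S, R < ‖p.1‖ → p.2 ∈ interior V →
      ∀ ξ ∈ frechetNormalCone2 (svGraph S) p, ‖ξ.2‖ ≤ ℓ * ‖ξ.1‖ := by
    rintro ⟨x, y⟩ hp hR hy ⟨u, w⟩ hξ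
    refine norm_le_of_mem_frechetNormalCone2_svGraph hℓ.le ?_ hξ
    filter_upwards [mem_interior_iff_mem_nhds.mp hy] with y' hy'
    exact hlipV y' hy' y (interior_subset hy) x hp hR
  ext v
  refine ⟨fun hv => ?_, fun hv => ?_⟩
  · simpa using norm_snd_le_of_mem_normalConeAtInfty (interior_mem_nhds.mpr hV) hbound hv
  · rw [Set.mem_singleton_iff.mp hv]
    show ((0 : Eucl n), -(0 : Eucl m)) ∈ normalConeAtInfty (svGraph S) ybar
    rw [neg_zero]
    exact zero_mem_normalConeAtInfty_svGraph hJ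

/-- the inverse Lipschitz-like property at infinity implies
coderivative nonsingularity at infinity. -/
theorem stmt13 {n m : ℕ} (S : Eucl n → Set (Eucl m)) (hS : IsClosed (svGraph S))
    (ybar : Eucl m) (hJ : ybar ∈ jelonek S)
    (hlip : ∃ R > (0:ℝ), ∃ ℓ > (0:ℝ), ∃ V ∈ 𝓝 ybar,
      ∀ y ∈ V, ∀ y' ∈ V, ∀ x ∈ svInv S y', R < ‖x‖ →
        x ∈ svInv S y + closedBall (0 : Eucl n) (ℓ * ‖y' - y‖)) :
    {v : Eucl m | (0 : Eucl n) ∈ coderivAtInfty S ybar v} = {0} :=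
  stmt13_general S ybar hJ hlip
end
end

section
/- (Distance characterization of the Lipschitz-like property at infinity.) Let F : ℝ^n ⇉ ℝ^m be a set-valued mapping with closed graph and ȳ ∈ J(F). The following are equivalent: (i) F is Lipschitz-like around (∞, ȳ), i.e., there exist constants R > 0, ℓ > 0 and a neighborhood V of ȳ in ℝ^m such that F(x) ∩ V ⊆ F(x') + ℓ‖x − x'‖𝔹 for all x, x' ∈ F⁻¹(V) \ 𝔹_R; (ii) there exist constants R > 0, ℓ > 0 and a neighborhood V of ȳ in ℝ^m such that |d_F(x, y) − d_F(x', y')| ≤ ℓ(‖x − x'‖ + ‖y − y'‖) for all x, x' ∈ F⁻¹(V) \ 𝔹_R and all y, y' ∈ V. -/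
open Filter Topology Set Metric Pointwise
open scoped RealInnerProductSpace ENNReal

noncomputable section

variable {E F G : Type*}
  [NormedAddCommGroup E] [InnerProductSpace ℝ E]
  [NormedAddCommGroup F] [InnerProductSpace ℝ F]
  [NormedAddCommGroup G] [InnerProductSpace ℝ G]

/-!
For `y ∈ F(x) ∩ V` we have `d_F(x, y) = 0`, so (ii) with `y = y'` bounds `dist(y, F(x'))` by
`ℓ‖x - x'‖`, and a nearest point of the closed set `F(x')` gives the inclusion (i).
Conversely, shrink `V` to a ball `B(ȳ, ρ)` with `B(ȳ, 3ρ) ⊆ V`. For `y'` in the small ball, either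
`dist(y', F(x')) ≥ 2ρ`, which already dominates `dist(y', F(x)) ≤ 2ρ` because `F(x)` meets
`B(ȳ, ρ)`, or the nearest point of `F(x')` to `y'` lies in `B(ȳ, 3ρ) ⊆ V`, where (i) moves it
into `F(x)` at cost `ℓ‖x - x'‖`. In `y` the distance is `1`-Lipschitz.
-/

section NormedGroup

variable {α : Type*} [NormedAddCommGroup α]

lemma infDist_le_of_mem_add_closedBall_zero {A : Set α} {v : α} {r : ℝ}
    (hv : v ∈ A + closedBall 0 r) : infDist v A ≤ r := by
  obtain ⟨a, ha, b, hb, rfl⟩ := hv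
  calc infDist (a + b) A ≤ dist (a + b) a := infDist_le_dist_of_mem ha
    _ = ‖b‖ := by rw [dist_eq_norm, add_sub_cancel_left]
    _ ≤ r := mem_closedBall_zero_iff.1 hb

variable [ProperSpace α]

lemma IsClosed.mem_add_closedBall_zero_of_infDist_le {A : Set α} (hA : IsClosed A)
    (hne : A.Nonempty) {v : α} {r : ℝ} (hv : infDist v A ≤ r) : v ∈ A + closedBall 0 r := by
  obtain ⟨a, ha, hva⟩ := hA.exists_infDist_eq_dist hne v
  refine ⟨a, ha, v - a, ?_, add_sub_cancel a v⟩
  rwa [mem_closedBall_zero_iff, ← dist_eq_norm, ← hva]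

lemma infDist_le_infDist_add_of_inter_subset_add_closedBall {A B W : Set α} {a y : α}
    {ρ r : ℝ} (hB : IsClosed B) (hBne : B.Nonempty) (hW : closedBall a (3 * ρ) ⊆ W)
    (hBA : B ∩ W ⊆ A + closedBall 0 r) (hA : (A ∩ closedBall a ρ).Nonempty)
    (hy : y ∈ closedBall a ρ) (hr : 0 ≤ r) :
    infDist y A ≤ infDist y B + r := by
  obtain ⟨w, hwA, hwa⟩ := hA
  have hyA : infDist y A ≤ 2 * ρ :=
    calc infDist y A ≤ dist y w := infDist_le_dist_of_mem hwA
      _ ≤ dist y a + dist w a := dist_triangle_right _ _ _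
      _ ≤ 2 * ρ := by linarith [mem_closedBall.1 hy, mem_closedBall.1 hwa]
  rcases le_or_gt (2 * ρ) (infDist y B) with hfar | hnear
  · linarith
  obtain ⟨v, hvB, hyv⟩ := hB.exists_infDist_eq_dist hBne y
  have hvW : v ∈ W := hW <| mem_closedBall.2 <|
    calc dist v a ≤ dist v y + dist y a := dist_triangle _ _ _
      _ ≤ 3 * ρ := by rw [dist_comm, ← hyv]; linarith [mem_closedBall.1 hy]
  calc infDist y A ≤ infDist v A + dist y v := infDist_le_infDist_add_dist
    _ ≤ r + infDist y B :=
      add_le_add (infDist_le_of_mem_add_closedBall_zero (hBA ⟨hvB, hvW⟩)) hyv.ge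
    _ = infDist y B + r := add_comm _ _

end NormedGroup

section SetValued

omit [InnerProductSpace ℝ E] [InnerProductSpace ℝ F]

variable {S : E → Set F}

lemma isClosed_apply_of_isClosed_svGraph (hS : IsClosed (svGraph S)) (x : E) :
    IsClosed (S x) :=
  hS.preimage (Continuous.prodMk_right x)

omit [NormedAddCommGroup E] in
lemma dSV_eq_infDist {x : E} {y : F} (hx : (S x).Nonempty) :
    dSV S (x, y) = (infDist y (S x) : EReal) :=
  (EReal.coe_ennreal_toReal (infEDist_ne_top hx)).symm

omit [NormedAddCommGroup E] in
lemma dSV_le_dSV_add_coe_iff {x x' : E} {y y' : F} (hx : (S x).Nonempty)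
    (hx' : (S x').Nonempty) (c : ℝ) :
    dSV S (x, y) ≤ dSV S (x', y') + c ↔ infDist y (S x) ≤ infDist y' (S x') + c := by
  rw [dSV_eq_infDist hx, dSV_eq_infDist hx', ← EReal.coe_add, EReal.coe_le_coe_iff]

def LipschitzLikeOn (S : E → Set F) (U : Set E) (V : Set F) (ℓ : ℝ) : Prop :=
  ∀ x ∈ U, ∀ x' ∈ U, S x ∩ V ⊆ S x' + closedBall 0 (ℓ * ‖x - x'‖)

def LipschitzDistOn (S : E → Set F) (U : Set E) (V : Set F) (ℓ : ℝ) : Prop :=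
  ∀ x ∈ U, ∀ x' ∈ U, ∀ y ∈ V, ∀ y' ∈ V,
    dSV S (x, y) ≤ dSV S (x', y') + ((ℓ * (‖x - x'‖ + ‖y - y'‖) : ℝ) : EReal)

lemma LipschitzLikeOn.mono {U U' : Set E} {V : Set F} {ℓ : ℝ} (h : LipschitzLikeOn S U V ℓ)
    (hU : U' ⊆ U) : LipschitzLikeOn S U' V ℓ :=
  fun x hx x' hx' => h x (hU hx) x' (hU hx')

variable [ProperSpace F]

lemma LipschitzDistOn.lipschitzLikeOn (hS : ∀ x, IsClosed (S x)) {U : Set E} {V : Set F}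
    {ℓ : ℝ} (hU : U ⊆ svPreimage S V) (h : LipschitzDistOn S U V ℓ) :
    LipschitzLikeOn S U V ℓ := by
  intro x hx x' hx' y ⟨hyx, hyV⟩
  have hx'ne : (S x').Nonempty := (hU hx').mono inter_subset_left
  have hxy := h x' hx' x hx y hyV y hyV
  rw [sub_self, norm_zero, add_zero, dSV_le_dSV_add_coe_iff hx'ne ⟨y, hyx⟩,
    infDist_zero_of_mem hyx, zero_add] at hxy
  exact (hS x').mem_add_closedBall_zero_of_infDist_le hx'ne (by rwa [norm_sub_rev])

lemma LipschitzLikeOn.lipschitzDistOn (hS : ∀ x, IsClosed (S x)) {U : Set E} {V : Set F}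
    {ybar : F} {ρ ℓ : ℝ} (hV : closedBall ybar (3 * ρ) ⊆ V)
    (hU : U ⊆ svPreimage S (closedBall ybar ρ)) (hℓ : 0 ≤ ℓ) (h : LipschitzLikeOn S U V ℓ) :
    LipschitzDistOn S U (closedBall ybar ρ) (max ℓ 1) := by
  intro x hx x' hx' y hy y' hy'
  have hx'ne : (S x').Nonempty := (hU hx').mono inter_subset_left
  rw [dSV_le_dSV_add_coe_iff ((hU hx).mono inter_subset_left) hx'ne]
  have hcore : infDist y' (S x) ≤ infDist y' (S x') + ℓ * ‖x - x'‖ := by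
    refine infDist_le_infDist_add_of_inter_subset_add_closedBall (hS x') hx'ne hV ?_ (hU hx)
      hy' (by positivity)
    simpa only [norm_sub_rev x'] using h x' hx' x hx
  have hcoef : ℓ * ‖x - x'‖ + ‖y - y'‖ ≤ max ℓ 1 * (‖x - x'‖ + ‖y - y'‖) := by
    rw [mul_add]
    gcongr
    exacts [le_max_left _ _, le_mul_of_one_le_left (norm_nonneg _) (le_max_right _ _)]
  calc infDist y (S x) ≤ infDist y' (S x) + dist y y' := infDist_le_infDist_add_dist
    _ ≤ infDist y' (S x') + max ℓ 1 * (‖x - x'‖ + ‖y - y'‖) := by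
      rw [dist_eq_norm]; linarith

end SetValued

theorem stmt14_general {n m : ℕ} (S : Eucl n → Set (Eucl m)) (hS : IsClosed (svGraph S))
    (ybar : Eucl m) :
    (∃ R > (0:ℝ), ∃ ℓ > (0:ℝ), ∃ V ∈ 𝓝 ybar,
      ∀ x ∈ svPreimage S V \ closedBall (0 : Eucl n) R,
        ∀ x' ∈ svPreimage S V \ closedBall (0 : Eucl n) R,
          S x ∩ V ⊆ S x' + closedBall (0 : Eucl m) (ℓ * ‖x - x'‖)) ↔
    (∃ R > (0:ℝ), ∃ ℓ > (0:ℝ), ∃ V ∈ 𝓝 ybar,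
      ∀ x ∈ svPreimage S V \ closedBall (0 : Eucl n) R,
        ∀ x' ∈ svPreimage S V \ closedBall (0 : Eucl n) R,
          ∀ y ∈ V, ∀ y' ∈ V,
            dSV S (x, y) ≤ dSV S (x', y')
              + (((ℓ * (‖x - x'‖ + ‖y - y'‖) : ℝ) : EReal))) := by
  have hS' := isClosed_apply_of_isClosed_svGraph hS
  constructor
  · rintro ⟨R, hR, ℓ, hℓ, V, hV, hLip⟩
    obtain ⟨ε, hε, hεV⟩ := nhds_basis_closedBall.mem_iff.1 hV
    have hV' : closedBall ybar (3 * (ε / 3)) ⊆ V := by rwa [mul_div_cancel₀ _ three_ne_zero]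
    have hpre : svPreimage S (closedBall ybar (ε / 3)) ⊆ svPreimage S V :=
      fun x ⟨y, hyx, hy⟩ => ⟨y, hyx, hV' (closedBall_subset_closedBall (by linarith) hy)⟩
    refine ⟨R, hR, max ℓ 1, by positivity, closedBall ybar (ε / 3),
      closedBall_mem_nhds _ (by positivity), ?_⟩
    exact LipschitzLikeOn.lipschitzDistOn hS' hV' sdiff_subset hℓ.le
      (LipschitzLikeOn.mono hLip (sdiff_subset_sdiff_left hpre))
  · rintro ⟨R, hR, ℓ, hℓ, V, hV, hDist⟩
    exact ⟨R, hR, ℓ, hℓ, V, hV, LipschitzDistOn.lipschitzLikeOn hS' sdiff_subset hDist⟩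

/-- distance characterization of the Lipschitz-like property at
infinity. -/
theorem stmt14 {n m : ℕ} (S : Eucl n → Set (Eucl m)) (hS : IsClosed (svGraph S))
    (ybar : Eucl m) (hJ : ybar ∈ jelonek S) :
    (∃ R > (0:ℝ), ∃ ℓ > (0:ℝ), ∃ V ∈ 𝓝 ybar,
      ∀ x ∈ svPreimage S V \ closedBall (0 : Eucl n) R,
        ∀ x' ∈ svPreimage S V \ closedBall (0 : Eucl n) R,
          S x ∩ V ⊆ S x' + closedBall (0 : Eucl m) (ℓ * ‖x - x'‖)) ↔
    (∃ R > (0:ℝ), ∃ ℓ > (0:ℝ), ∃ V ∈ 𝓝 ybar,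
      ∀ x ∈ svPreimage S V \ closedBall (0 : Eucl n) R,
        ∀ x' ∈ svPreimage S V \ closedBall (0 : Eucl n) R,
          ∀ y ∈ V, ∀ y' ∈ V,
            dSV S (x, y) ≤ dSV S (x', y')
              + (((ℓ * (‖x - x'‖ + ‖y - y'‖) : ℝ) : EReal))) :=
  stmt14_general S hS ybar
end
end

section
/- (Mordukhovich's criterion at infinity, Lipschitz form.) Let F : ℝ^n ⇉ ℝ^m be a set-valued mapping with closed graph and ȳ ∈ J(F). Then D*F(∞, ȳ)(0) = {0} if and only if there exist constants R > 0, ℓ > 0 and a neighborhood V of ȳ in ℝ^m such that the distance function d_F is Lipschitz continuous with modulus ℓ on some neighborhood of each point of gph F ∩ ((ℝ^n \ 𝔹_R) × V). -/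
/-!
If `d_F` is `ℓ`-Lipschitz near a point `p` of the graph, then moving `x` in a direction `w` can
be followed inside the graph at speed `ℓ ‖w‖`, so every regular normal `(u, v)` at `p` satisfies
`‖u‖ ≤ ℓ ‖v‖`; hence normals at infinity of the form `(u, 0)` vanish.

Conversely, if `d_F` fails to be `ℓ`-Lipschitz near `p`, there are `q = (x, y)` and `q'` close to
`p` with `d_F q > d_F q' + ℓ ‖q - q'‖`. Minimising `(ℓ/2) ‖u - x‖ + √(‖v - y‖² + σ²)` over the
graph gives a minimiser `(a, b)` near `p` with `a ≠ x` (otherwise `d_F q` would be too small), and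
the negative gradient there is, after rescaling, a regular normal `(u, v)` with `‖u‖ = 1` and
`‖v‖ ≤ 2/ℓ`. Letting `ℓ → ∞` along graph points tending to `(∞, ȳ)` and extracting a convergent
subsequence yields a unit vector in `D*F(∞, ȳ)(0)`.
-/

open Filter Topology Set Metric Pointwise
open scoped RealInnerProductSpace ENNReal

noncomputable section

variable {E F G : Type*}
  [NormedAddCommGroup E] [InnerProductSpace ℝ E]
  [NormedAddCommGroup F] [InnerProductSpace ℝ F]
  [NormedAddCommGroup G] [InnerProductSpace ℝ G]

theorem dSV_nonneg {X Y : Type*} [NormedAddCommGroup Y] (S : X → Set Y) (p : X × Y) :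
    0 ≤ dSV S p :=
  EReal.coe_ennreal_nonneg _

theorem dSV_eq_zero_of_mem {X Y : Type*} [NormedAddCommGroup Y] {S : X → Set Y} {p : X × Y}
    (hp : p ∈ svGraph S) : dSV S p = 0 := by
  show ((Metric.infEDist p.2 (S p.1) : ℝ≥0∞) : EReal) = 0
  rw [Metric.infEDist_zero_of_mem (show p.2 ∈ S p.1 from hp), EReal.coe_ennreal_zero]

theorem dSV_le_dist_of_mem {X Y : Type*} [NormedAddCommGroup Y] {S : X → Set Y} {x : X} {y b : Y}
    (hb : b ∈ S x) : dSV S (x, y) ≤ ((dist y b : ℝ) : EReal) := by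
  have h : Metric.infEDist y (S x) ≤ ENNReal.ofReal (dist y b) :=
    (Metric.infEDist_le_edist_of_mem hb).trans_eq (edist_dist y b)
  calc dSV S (x, y) ≤ ((ENNReal.ofReal (dist y b) : ℝ≥0∞) : EReal) :=
        EReal.coe_ennreal_le_coe_ennreal_iff.mpr h
    _ = ((dist y b : ℝ) : EReal) := by rw [EReal.coe_ennreal_ofReal, max_eq_left dist_nonneg]

theorem exists_mem_dist_lt_of_dSV_lt {X Y : Type*} [NormedAddCommGroup Y] {S : X → Set Y}
    {p : X × Y} {r : ℝ} (h : dSV S p < (r : EReal)) : ∃ y ∈ S p.1, dist p.2 y < r := by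
  have hr : 0 ≤ r := by exact_mod_cast (dSV_nonneg S p).trans h.le
  rw [← max_eq_left hr, ← EReal.coe_ennreal_ofReal, dSV,
    EReal.coe_ennreal_lt_coe_ennreal_iff] at h
  obtain ⟨y, hy, hyd⟩ := Metric.infEDist_lt_iff.mp h
  exact ⟨y, hy, edist_lt_ofReal.mp hyd⟩

theorem dSV_eq_coe_toReal_of_add_lt {X Y : Type*} [NormedAddCommGroup Y] {S : X → Set Y}
    {q q' : X × Y} {a : ℝ} (h : dSV S q' + (a : EReal) < dSV S q) :
    dSV S q' = ((dSV S q').toReal : EReal) := by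
  refine (EReal.coe_toReal ?_ (EReal.coe_ennreal_ne_bot _)).symm
  intro (htop : dSV S q' = ⊤)
  rw [htop, EReal.top_add_coe] at h
  exact not_top_lt h

theorem smul_mem_frechetNormalCone2 {Ω : Set (E × F)} {p ξ : E × F}
    (hξ : ξ ∈ frechetNormalCone2 Ω p) {t : ℝ} (ht : 0 < t) :
    t • ξ ∈ frechetNormalCone2 Ω p := by
  refine ⟨hξ.1, fun ε hε => (hξ.2 (ε / t) (by positivity)).mono fun q hq => ?_⟩
  simp only [Prod.smul_fst, Prod.smul_snd, real_inner_smul_left]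
  calc t * ⟪ξ.1, q.1 - p.1⟫ + t * ⟪ξ.2, q.2 - p.2⟫
      = t * (⟪ξ.1, q.1 - p.1⟫ + ⟪ξ.2, q.2 - p.2⟫) := by ring
    _ ≤ t * (ε / t * ‖q - p‖) := by gcongr
    _ = ε * ‖q - p‖ := by field_simp

def DistLipschitzAt {X Y : Type*} [PseudoMetricSpace X] [NormedAddCommGroup Y]
    (S : X → Set Y) (ℓ : ℝ) (p : X × Y) : Prop :=
  ∃ U ∈ 𝓝 p, ∀ q ∈ U, ∀ q' ∈ U, dSV S q ≤ dSV S q' + ((ℓ * dist q q' : ℝ) : EReal)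

theorem DistLipschitzAt.eventually_dSV_le {X Y : Type*} [PseudoMetricSpace X]
    [NormedAddCommGroup Y] {S : X → Set Y} {ℓ : ℝ} {p : X × Y} (h : DistLipschitzAt S ℓ p)
    (hp : p ∈ svGraph S) : ∀ᶠ x in 𝓝 p.1, dSV S (x, p.2) ≤ ((ℓ * dist x p.1 : ℝ) : EReal) := by
  obtain ⟨U, hU, hLip⟩ := h
  have hx : Tendsto (fun x => (x, p.2)) (𝓝 p.1) (𝓝 p) :=
    tendsto_id.prodMk_nhds tendsto_const_nhds
  filter_upwards [hx hU] with x hxU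
  simpa [dSV_eq_zero_of_mem hp, Prod.dist_eq] using hLip _ hxU p (mem_of_mem_nhds hU)

theorem exists_pos_of_mem_frechetNormalCone2 {Ω : Set (E × F)} {p ξ : E × F}
    (hξ : ξ ∈ frechetNormalCone2 Ω p) {ε : ℝ} (hε : 0 < ε) :
    ∃ δ > 0, ∀ q ∈ Ω, dist q p < δ → ⟪ξ.1, q.1 - p.1⟫ + ⟪ξ.2, q.2 - p.2⟫ ≤ ε * ‖q - p‖ := by
  have h := hξ.2 ε hε
  rw [eventually_nhdsWithin_iff, Metric.eventually_nhds_iff] at h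
  obtain ⟨δ, hδ, h⟩ := h
  exact ⟨δ, hδ, fun q hq hqp => h hqp hq⟩

theorem eventually_exists_mem_norm_sub_lt {X Y : Type*} [NormedAddCommGroup X] [NormedSpace ℝ X]
    [NormedAddCommGroup Y] {S : X → Set Y} {p : X × Y} {ℓ : ℝ}
    (hd : ∀ᶠ x in 𝓝 p.1, dSV S (x, p.2) ≤ ((ℓ * dist x p.1 : ℝ) : EReal)) (w : X) :
    ∀ᶠ t in 𝓝[>] (0 : ℝ), ∃ y ∈ S (p.1 + t • w), ‖y - p.2‖ < t * (ℓ * ‖w‖ + t) := by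
  have hpath : Tendsto (fun t : ℝ => p.1 + t • w) (𝓝 0) (𝓝 p.1) :=
    Continuous.tendsto' (by fun_prop) 0 _ (by simp)
  filter_upwards [eventually_mem_nhdsWithin, nhdsWithin_le_nhds (hpath.eventually hd)]
    with t (ht : 0 < t) htd
  have hdist : dist (p.1 + t • w) p.1 = t * ‖w‖ := by
    rw [dist_eq_norm, add_sub_cancel_left, norm_smul, Real.norm_of_nonneg ht.le]
  obtain ⟨y, hy, hyd⟩ := exists_mem_dist_lt_of_dSV_lt (htd.trans_lt (EReal.coe_lt_coe_iff.mpr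
    (show ℓ * dist (p.1 + t • w) p.1 < t * (ℓ * ‖w‖ + t) by rw [hdist]; nlinarith)))
  exact ⟨y, hy, by rwa [← dist_eq_norm, dist_comm]⟩

theorem inner_fst_le_of_mem_frechetNormalCone2 {S : E → Set F} {p ξ : E × F} {ℓ : ℝ} (hℓ : 0 ≤ ℓ)
    (hξ : ξ ∈ frechetNormalCone2 (svGraph S) p)
    (hd : ∀ᶠ x in 𝓝 p.1, dSV S (x, p.2) ≤ ((ℓ * dist x p.1 : ℝ) : EReal)) (w : E) :
    ⟪ξ.1, w⟫ ≤ ℓ * ‖ξ.2‖ * ‖w‖ := by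
  set C := ‖w‖ + ℓ * ‖w‖ + 1
  have hC : 0 < C := by positivity
  suffices key : ∀ ε > 0, ⟪ξ.1, w⟫ ≤ ℓ * ‖ξ.2‖ * ‖w‖ + ε * (‖ξ.2‖ + C) by
    refine le_of_forall_pos_le_add fun ε hε => ?_
    simpa [div_mul_cancel₀ ε (by positivity : ‖ξ.2‖ + C ≠ 0)] using
      key (ε / (‖ξ.2‖ + C)) (by positivity)
  intro ε hε
  obtain ⟨δ, hδ, hcone⟩ := exists_pos_of_mem_frechetNormalCone2 hξ hε
  -- test the normal against the graph point `(p.1 + t • w, y)` for a small `t > 0`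
  have hsmall : Tendsto (fun t : ℝ => t * C) (𝓝 0) (𝓝 0) :=
    Continuous.tendsto' (by fun_prop) 0 0 (by simp)
  obtain ⟨t, ⟨(ht0 : 0 < t), htε, htδ⟩, y, hy, hyp⟩ :=
    ((eventually_mem_nhdsWithin.and (nhdsWithin_le_nhds ((gt_mem_nhds (lt_min one_pos hε)).and
      (hsmall.eventually (gt_mem_nhds hδ))))).and (eventually_exists_mem_norm_sub_lt hd w)).exists
  have ht1 : t < 1 := htε.trans_le (min_le_left _ _)
  have htε' : t < ε := htε.trans_le (min_le_right _ _)
  have hqp : ‖((p.1 + t • w, y) : E × F) - p‖ ≤ t * C := by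
    have hℓw := mul_nonneg hℓ (norm_nonneg w)
    rw [Prod.norm_def, max_le_iff]
    simp only [Prod.fst_sub, Prod.snd_sub, add_sub_cancel_left, norm_smul,
      Real.norm_of_nonneg ht0.le]
    exact ⟨by gcongr; linarith, hyp.le.trans (by gcongr; linarith [norm_nonneg w])⟩
  have hineq := hcone (p.1 + t • w, y) hy (by rw [dist_eq_norm]; linarith)
  simp only [add_sub_cancel_left, real_inner_smul_right] at hineq
  have hv : -(‖ξ.2‖ * (t * (ℓ * ‖w‖ + t))) ≤ ⟪ξ.2, y - p.2⟫ :=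
    neg_le_of_abs_le ((abs_real_inner_le_norm _ _).trans (by gcongr))
  have : t * ⟪ξ.1, w⟫ ≤ t * (ℓ * ‖ξ.2‖ * ‖w‖ + ε * (‖ξ.2‖ + C)) := by
    have h1 := mul_le_mul_of_nonneg_left hqp hε.le
    have h2 := mul_le_mul_of_nonneg_left htε'.le (mul_nonneg (norm_nonneg ξ.2) ht0.le)
    nlinarith
  exact le_of_mul_le_mul_left this ht0

theorem norm_fst_le_of_mem_frechetNormalCone2 {S : E → Set F} {p ξ : E × F} {ℓ : ℝ} (hℓ : 0 ≤ ℓ)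
    (hξ : ξ ∈ frechetNormalCone2 (svGraph S) p)
    (hd : ∀ᶠ x in 𝓝 p.1, dSV S (x, p.2) ≤ ((ℓ * dist x p.1 : ℝ) : EReal)) :
    ‖ξ.1‖ ≤ ℓ * ‖ξ.2‖ := by
  rcases (norm_nonneg ξ.1).eq_or_lt with h0 | hpos
  · rw [← h0]; positivity
  · have h := inner_fst_le_of_mem_frechetNormalCone2 hℓ hξ hd ξ.1
    rw [real_inner_self_eq_norm_sq] at h
    exact le_of_mul_le_mul_right (by nlinarith) hpos

theorem coderivAtInfty_zero_subset_of_distLipschitzAt {S : E → Set F} {ybar : F} {R ℓ : ℝ}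
    (hℓ : 0 ≤ ℓ) {V : Set F} (hV : V ∈ 𝓝 ybar)
    (hLip : ∀ p ∈ svGraph S, R < ‖p.1‖ → p.2 ∈ V → DistLipschitzAt S ℓ p) :
    coderivAtInfty S ybar 0 ⊆ {0} := by
  rintro u ⟨pk, ξk, hmem, hx, hy, hcone, hlim⟩
  have hbound : ∀ᶠ k in atTop, ‖(ξk k).1‖ ≤ ℓ * ‖(ξk k).2‖ := by
    filter_upwards [hx.eventually_gt_atTop R, hy hV] with k hR hV
    exact norm_fst_le_of_mem_frechetNormalCone2 hℓ (hcone k)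
      ((hLip _ (hmem k) hR hV).eventually_dSV_le (hmem k))
  have h := le_of_tendsto_of_tendsto hlim.fst_nhds.norm (hlim.snd_nhds.norm.const_mul ℓ) hbound
  simpa using h

theorem zero_mem_coderivAtInfty {S : E → Set F} {ybar : F} (hJ : ybar ∈ jelonek S) :
    (0 : E) ∈ coderivAtInfty S ybar 0 := by
  obtain ⟨xk, yk, hx, hy, hlim⟩ := hJ
  refine ⟨fun k => (xk k, yk k), fun _ => 0, hy, hx, hlim,
    fun k => zero_mem_frechetNormalCone2 (hy k), ?_⟩
  rw [neg_zero, Prod.mk_zero_zero]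
  exact tendsto_const_nhds

theorem hasFDerivAt_sqrt_norm_sub_sq_add {y b : F} {τ : ℝ} (h : 0 < ‖b - y‖ ^ 2 + τ) :
    HasFDerivAt (fun v => √(‖v - y‖ ^ 2 + τ))
      (innerSL ℝ ((√(‖b - y‖ ^ 2 + τ))⁻¹ • (b - y))) b := by
  have hs : √(‖b - y‖ ^ 2 + τ) ≠ 0 := (Real.sqrt_pos.mpr h).ne'
  convert (((hasFDerivAt_id b).sub_const y).norm_sq.add_const τ).sqrt h.ne' using 1
  · rfl
  ext v
  simp only [map_smul, map_sub, smul_apply, sub_apply, coe_innerSL_apply, smul_eq_mul, id_eq,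
    one_div, mul_inv_rev, ContinuousLinearMap.comp_id, nsmul_eq_mul, Nat.cast_ofNat]
  field_simp

theorem neg_mem_frechetNormalCone2_of_isLocalMinOn {Ω : Set (E × F)} {p : E × F} (hp : p ∈ Ω)
    {f : E → ℝ} {g : F → ℝ} {f' : E} {g' : F} (hf : HasFDerivAt f (innerSL ℝ f') p.1)
    (hg : HasFDerivAt g (innerSL ℝ g') p.2)
    (hmin : IsLocalMinOn (fun z => f z.1 + g z.2) Ω p) :
    (-f', -g') ∈ frechetNormalCone2 Ω p := by
  have hφ := (hf.comp p hasFDerivAt_fst).add (hg.comp p hasFDerivAt_snd)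
  refine ⟨hp, fun ε hε => ?_⟩
  filter_upwards [nhdsWithin_le_nhds (hφ.isLittleO.def hε), hmin] with q hq hqmin
  simp only [add_apply, ContinuousLinearMap.comp_apply, ContinuousLinearMap.coe_fst',
    ContinuousLinearMap.coe_snd', innerSL_apply_apply, Prod.fst_sub, Prod.snd_sub,
    Pi.add_apply, Function.comp_apply, Real.norm_eq_abs] at hq hqmin
  simp only [inner_neg_left]
  linarith [le_abs_self (f q.1 + g q.2 - (f p.1 + g p.2) - (⟪f', q.1 - p.1⟫ + ⟪g', q.2 - p.2⟫))]

theorem hasFDerivAt_norm_sub {x a : E} (ha : a ≠ x) :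
    HasFDerivAt (fun u => ‖u - x‖) (innerSL ℝ (‖a - x‖⁻¹ • (a - x))) a := by
  have h : 0 < ‖a - x‖ ^ 2 + 0 := by
    have := norm_pos_iff.mpr (sub_ne_zero.mpr ha)
    positivity
  simpa [Real.sqrt_sq (norm_nonneg _)] using hasFDerivAt_sqrt_norm_sub_sq_add h

theorem exists_frechetNormal_of_isLocalMinOn {Ω : Set (E × F)} {w q : E × F} (hw : w ∈ Ω)
    {c σ : ℝ} (hc : 0 < c) (hσ : 0 < σ) (hne : w.1 ≠ q.1)
    (hmin : IsLocalMinOn (fun u => c * ‖u.1 - q.1‖ + √(‖u.2 - q.2‖ ^ 2 + σ ^ 2)) Ω w) :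
    ∃ ξ ∈ frechetNormalCone2 Ω w, ‖ξ.1‖ = 1 ∧ ‖ξ.2‖ ≤ c⁻¹ := by
  have hs : 0 < √(‖w.2 - q.2‖ ^ 2 + σ ^ 2) := Real.sqrt_pos.mpr (by positivity)
  have hf : HasFDerivAt (fun u => c * ‖u - q.1‖)
      (innerSL ℝ (c • (‖w.1 - q.1‖⁻¹ • (w.1 - q.1)))) w.1 := by
    simpa [map_smul] using (hasFDerivAt_norm_sub hne).const_mul c
  have hg := hasFDerivAt_sqrt_norm_sub_sq_add (y := q.2) (b := w.2) (τ := σ ^ 2) (by positivity)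
  have hξ := neg_mem_frechetNormalCone2_of_isLocalMinOn hw hf hg hmin
  refine ⟨_, smul_mem_frechetNormalCone2 hξ (inv_pos.mpr hc), ?_, ?_⟩
  · have : ‖w.1 - q.1‖ ≠ 0 := norm_ne_zero_iff.mpr (sub_ne_zero.mpr hne)
    simp only [Prod.smul_fst, norm_smul, norm_neg, norm_inv, norm_norm,
      Real.norm_of_nonneg hc.le]
    field_simp
  · simp only [Prod.smul_snd, norm_smul, norm_neg, norm_inv, Real.norm_eq_abs, abs_of_pos hc,
      abs_of_pos hs]
    refine mul_le_of_le_one_right (inv_nonneg.mpr hc.le) ?_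
    rw [inv_mul_le_one₀ hs]
    exact Real.le_sqrt_of_sq_le (by nlinarith)

theorem exists_frechetNormal_of_lt_dSV [ProperSpace E] [ProperSpace F] {S : E → Set F}
    (hS : IsClosed (svGraph S)) {q z : E × F} (hz : z ∈ svGraph S) {c σ : ℝ} (hc : 1 ≤ c)
    (hσ : 0 < σ) (hlt : ((c * ‖z.1 - q.1‖ + ‖z.2 - q.2‖ + σ : ℝ) : EReal) < dSV S q) :
    ∃ w ∈ svGraph S, dist w q ≤ c * ‖z.1 - q.1‖ + ‖z.2 - q.2‖ + σ ∧
      ∃ ξ ∈ frechetNormalCone2 (svGraph S) w, ‖ξ.1‖ = 1 ∧ ‖ξ.2‖ ≤ c⁻¹ := by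
  set M := c * ‖z.1 - q.1‖ + ‖z.2 - q.2‖ + σ
  set φ : E × F → ℝ := fun u => c * ‖u.1 - q.1‖ + √(‖u.2 - q.2‖ ^ 2 + σ ^ 2)
  have hφz : φ z ≤ M := by
    have : √(‖z.2 - q.2‖ ^ 2 + σ ^ 2) ≤ ‖z.2 - q.2‖ + σ :=
      Real.sqrt_le_iff.mpr ⟨by positivity, by nlinarith [norm_nonneg (z.2 - q.2)]⟩
    simp only [φ, M]
    linarith
  have hsub (u : E × F) (hu : φ u ≤ M) : dist u q ≤ M := by
    have h1 : ‖u.1 - q.1‖ ≤ c * ‖u.1 - q.1‖ := le_mul_of_one_le_left (norm_nonneg _) hc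
    have h2 : ‖u.2 - q.2‖ ≤ √(‖u.2 - q.2‖ ^ 2 + σ ^ 2) := Real.le_sqrt_of_sq_le (by nlinarith)
    have h3 := Real.sqrt_nonneg (‖u.2 - q.2‖ ^ 2 + σ ^ 2)
    have h4 : 0 ≤ c * ‖u.1 - q.1‖ := by positivity
    simp only [φ] at hu
    rw [Prod.dist_eq, dist_eq_norm, dist_eq_norm, max_le_iff]
    constructor <;> linarith
  -- a global minimiser of `φ` on the graph lies in the compact `closedBall q M`
  obtain ⟨w, hw, hwmin⟩ : ∃ w ∈ svGraph S, IsMinOn φ (svGraph S) w := by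
    refine ContinuousOn.exists_isMinOn' (by fun_prop) hS hz ?_
    filter_upwards [mem_inf_of_left (isCompact_closedBall q M).compl_mem_cocompact] with u hu
    by_contra! h
    exact hu (hsub u (h.le.trans hφz))
  have hwM : dist w q ≤ M := hsub w ((hwmin hz).trans hφz)
  have hne : w.1 ≠ q.1 := by
    intro h
    have hd : dSV S q ≤ ((dist q.2 w.2 : ℝ) : EReal) :=
      dSV_le_dist_of_mem (show w.2 ∈ S q.1 from h ▸ hw)
    have : dist q.2 w.2 ≤ M := by
      rw [Prod.dist_eq] at hwM
      rw [dist_comm]; exact (le_max_right _ _).trans hwM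
    exact (hlt.trans_le hd).not_ge (by exact_mod_cast this)
  exact ⟨w, hw, hwM, exists_frechetNormal_of_isLocalMinOn hw (by linarith) hσ hne hwmin.localize⟩

theorem exists_frechetNormal_of_dSV_add_lt [ProperSpace E] [ProperSpace F] {S : E → Set F}
    (hS : IsClosed (svGraph S)) {q q' : E × F} {D ℓ : ℝ} (hℓ : 2 < ℓ) (hD : dSV S q' = D)
    (hlt : ((D + ℓ * dist q q' : ℝ) : EReal) < dSV S q) :
    ∃ w ∈ svGraph S, dist w q ≤ D + ℓ * dist q q' ∧
      ∃ ξ ∈ frechetNormalCone2 (svGraph S) w, ‖ξ.1‖ = 1 ∧ ‖ξ.2‖ ≤ 2 / ℓ := by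
  have he : 0 < dist q q' := by
    refine dist_pos.mpr fun h => ?_
    rw [h, hD, dist_self, mul_zero, add_zero] at hlt
    exact lt_irrefl _ hlt
  -- the slack `(ℓ/2 - 1) * dist q q'` is shared between `σ` and the choice of `y` below
  set σ := (ℓ / 2 - 1) * dist q q' / 2
  have hσ : 0 < σ := by
    have : 0 < ℓ / 2 - 1 := by linarith
    positivity
  obtain ⟨y, hy, hyd⟩ : ∃ y ∈ S q'.1, dist q'.2 y < D + σ :=
    exists_mem_dist_lt_of_dSV_lt (hD.trans_lt (EReal.coe_lt_coe_iff.mpr (by linarith)))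
  have hqq' := Prod.dist_eq (x := q) (y := q')
  have h1 : ‖q'.1 - q.1‖ ≤ dist q q' := by
    rw [← dist_eq_norm, dist_comm, hqq']; exact le_max_left _ _
  have h2 : ‖y - q.2‖ ≤ D + σ + dist q q' := by
    have : dist q.2 q'.2 ≤ dist q q' := hqq' ▸ le_max_right _ _
    rw [← dist_eq_norm]
    linarith [dist_triangle y q'.2 q.2, dist_comm q'.2 y, dist_comm q.2 q'.2]
  have hM : ℓ / 2 * ‖q'.1 - q.1‖ + ‖y - q.2‖ + σ ≤ D + ℓ * dist q q' := by
    have := mul_le_mul_of_nonneg_left h1 (by linarith : (0 : ℝ) ≤ ℓ / 2)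
    simp only [σ] at h2 ⊢
    linarith
  obtain ⟨w, hw, hwq, ξ, hξ, hξ1, hξ2⟩ := exists_frechetNormal_of_lt_dSV hS (z := (q'.1, y)) hy
    (by linarith) hσ ((EReal.coe_le_coe_iff.mpr hM).trans_lt hlt)
  exact ⟨w, hw, hwq.trans hM, ξ, hξ, hξ1, by rwa [inv_div] at hξ2⟩

theorem exists_frechetNormal_near_of_not_distLipschitzAt [ProperSpace E] [ProperSpace F]
    {S : E → Set F} (hS : IsClosed (svGraph S)) {p : E × F} (hp : p ∈ svGraph S) {ℓ : ℝ}
    (hℓ : 2 < ℓ) (hfail : ¬ DistLipschitzAt S ℓ p) {δ : ℝ} (hδ : 0 < δ) :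
    ∃ w ∈ svGraph S, dist w p < δ ∧
      ∃ ξ ∈ frechetNormalCone2 (svGraph S) w, ‖ξ.1‖ = 1 ∧ ‖ξ.2‖ ≤ 2 / ℓ := by
  set r := δ / (4 * ℓ)
  have hr : 0 < r := by positivity
  have hrδ : 4 * ℓ * r = δ := by simp only [r]; field_simp
  obtain ⟨q, hq, q', hq', hlt⟩ : ∃ q ∈ ball p r, ∃ q' ∈ ball p r,
      dSV S q' + ((ℓ * dist q q' : ℝ) : EReal) < dSV S q := by
    unfold DistLipschitzAt at hfail
    push Not at hfail
    exact hfail _ (ball_mem_nhds p hr)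
  have hD : dSV S q' = ((dSV S q').toReal : EReal) := dSV_eq_coe_toReal_of_add_lt hlt
  set D := (dSV S q').toReal
  rw [hD, ← EReal.coe_add] at hlt
  have hqp := mem_ball.mp hq
  have hq'p := mem_ball.mp hq'
  have hℓr : r ≤ ℓ * r := le_mul_of_one_le_left hr.le (by linarith)
  -- either the pair `(q, q')` or the pair `(q', p)` witnesses the failure with `D` small
  by_cases hcase : D ≤ ℓ * dist q' p
  · obtain ⟨w, hw, hwq, hξ⟩ := exists_frechetNormal_of_dSV_add_lt hS hℓ hD hlt
    refine ⟨w, hw, ?_, hξ⟩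
    have h1 : ℓ * dist q' p < ℓ * r := by gcongr
    have h2 : ℓ * dist q q' < ℓ * (2 * r) := by
      gcongr
      linarith [dist_triangle_right q q' p]
    linarith [dist_triangle w q p]
  · push Not at hcase
    obtain ⟨w, hw, hwq, hξ⟩ := exists_frechetNormal_of_dSV_add_lt hS hℓ
      ((dSV_eq_zero_of_mem hp).trans EReal.coe_zero.symm)
      (by rw [hD, zero_add]; exact_mod_cast hcase)
    refine ⟨w, hw, ?_, hξ⟩
    have h1 : ℓ * dist q' p < ℓ * r := by gcongr
    linarith [dist_triangle w q' p]

theorem exists_norm_eq_one_mem_normalConeAtInfty [ProperSpace E] {Ω : Set (E × F)} {ybar : F}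
    {w ξ : ℕ → E × F} (hw : ∀ k, w k ∈ Ω) (hw1 : Tendsto (fun k => ‖(w k).1‖) atTop atTop)
    (hw2 : Tendsto (fun k => (w k).2) atTop (𝓝 ybar))
    (hξ : ∀ k, ξ k ∈ frechetNormalCone2 Ω (w k)) (hξ1 : ∀ k, ‖(ξ k).1‖ = 1)
    (hξ2 : Tendsto (fun k => (ξ k).2) atTop (𝓝 0)) :
    ∃ u : E, ‖u‖ = 1 ∧ (u, 0) ∈ normalConeAtInfty Ω ybar := by
  obtain ⟨u, hu, φ, hφ, hlim⟩ :=
    (isCompact_sphere (0 : E) 1).tendsto_subseq (x := fun k => (ξ k).1) (by simpa using hξ1)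
  exact ⟨u, by simpa using hu, w ∘ φ, ξ ∘ φ, fun k => hw _, hw1.comp hφ.tendsto_atTop,
    hw2.comp hφ.tendsto_atTop, fun k => hξ _, hlim.prodMk_nhds (hξ2.comp hφ.tendsto_atTop)⟩

theorem exists_distLipschitzAt_of_coderivAtInfty_zero_subset [ProperSpace E] [ProperSpace F]
    {S : E → Set F} (hS : IsClosed (svGraph S)) {ybar : F} (h : coderivAtInfty S ybar 0 ⊆ {0}) :
    ∃ R > (0 : ℝ), ∃ ℓ > (0 : ℝ), ∃ V ∈ 𝓝 ybar,
      ∀ p ∈ svGraph S, R < ‖p.1‖ → p.2 ∈ V → DistLipschitzAt S ℓ p := by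
  by_contra! hfail
  have hk (k : ℕ) : ∃ w ∈ svGraph S, (k : ℝ) < ‖w.1‖ ∧ dist w.2 ybar < 2 / (k + 1) ∧
      ∃ ξ ∈ frechetNormalCone2 (svGraph S) w, ‖ξ.1‖ = 1 ∧ ‖ξ.2‖ ≤ 2 / (k + 3) := by
    have hk1 : (0 : ℝ) < k + 1 := by positivity
    obtain ⟨p, hp, hpR, hpV, hpfail⟩ := hfail (k + 1) hk1 (k + 3) (by positivity)
      (ball ybar (1 / (k + 1))) (ball_mem_nhds _ (by positivity))
    obtain ⟨w, hw, hwp, hξ⟩ := exists_frechetNormal_near_of_not_distLipschitzAt hS hp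
      (by linarith) hpfail (one_div_pos.mpr hk1)
    have hwp' := Prod.dist_eq (x := w) (y := p) ▸ hwp
    rw [max_lt_iff] at hwp'
    have h1 : 1 / ((k : ℝ) + 1) ≤ 1 := (div_le_one hk1).mpr (by linarith)
    refine ⟨w, hw, ?_, ?_, hξ⟩
    · linarith [norm_sub_norm_le p.1 w.1, dist_eq_norm w.1 p.1, norm_sub_rev w.1 p.1]
    · have h2 : 2 / ((k : ℝ) + 1) = 1 / (k + 1) + 1 / (k + 1) := by ring
      linarith [dist_triangle w.2 p.2 ybar, mem_ball.mp hpV]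
  choose w hw hw1 hw2 ξ hξ hξ1 hξ2 using hk
  have hdecay (a b : ℝ) : Tendsto (fun k : ℕ => a / (k + b)) atTop (𝓝 0) :=
    tendsto_const_nhds.div_atTop (tendsto_natCast_atTop_atTop.atTop_add tendsto_const_nhds)
  obtain ⟨u, hu, hmem⟩ := exists_norm_eq_one_mem_normalConeAtInfty hw
    (tendsto_atTop_mono (fun k => (hw1 k).le) tendsto_natCast_atTop_atTop)
    (tendsto_iff_dist_tendsto_zero.mpr
      (squeeze_zero (fun _ => dist_nonneg) (fun k => (hw2 k).le) (hdecay 2 1)))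
    hξ hξ1 (squeeze_zero_norm hξ2 (hdecay 2 3))
  have hu0 : u = 0 := h (show (u, -(0 : F)) ∈ normalConeAtInfty (svGraph S) ybar by
    rwa [neg_zero])
  simp [hu0] at hu

/-- Mordukhovich's criterion at infinity, Lipschitz form. -/
theorem stmt16 {n m : ℕ} (S : Eucl n → Set (Eucl m)) (hS : IsClosed (svGraph S))
    (ybar : Eucl m) (hJ : ybar ∈ jelonek S) :
    coderivAtInfty S ybar 0 = ({0} : Set (Eucl n)) ↔
      ∃ R > (0:ℝ), ∃ ℓ > (0:ℝ), ∃ V ∈ 𝓝 ybar,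
        ∀ p ∈ svGraph S, R < ‖p.1‖ → p.2 ∈ V →
          ∃ U ∈ 𝓝 p, ∀ q ∈ U, ∀ q' ∈ U,
            dSV S q ≤ dSV S q' + (((ℓ * dist q q' : ℝ) : EReal)) := by
  refine ⟨fun h => exists_distLipschitzAt_of_coderivAtInfty_zero_subset hS h.le, ?_⟩
  rintro ⟨R, -, ℓ, hℓ, V, hV, hLip⟩
  exact (coderivAtInfty_zero_subset_of_distLipschitzAt hℓ.le hV hLip).antisymm
    (singleton_subset_iff.mpr (zero_mem_coderivAtInfty hJ))
end
end

section
/- (Fermat's rule at infinity.) Let F : ℝ^n ⇉ ℝ^m be a set-valued mapping with closed graph, K ⊊ ℝ^m a pointed closed convex cone with nonempty interior, and Ω ⊆ ℝ^n an unbounded closed set. Let ȳ ∈ cl F(Ω) \ F(Ω) be a weak efficient value for the problem of minimizing F over Ω with respect to K, i.e., (ȳ − int K) ∩ F(Ω) = ∅. Assume the constraint qualification at infinity D*F(∞, ȳ)(0) ∩ (−N_Ω(∞)) = {0}. Then there exists a vector c* ∈ K⁺ with c* ≠ 0 such that 0 ∈ D*F(∞, ȳ)(c*) + N_Ω(∞).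 -/
/-!
Take `x_j ∈ Ω`, `y_j ∈ F(x_j)` with `y_j → ȳ`; since `gph F` and `Ω` are closed and
`ȳ ∉ F(Ω)`, necessarily `‖x_j‖ → ∞`. For `e ∈ int K` and `t > 0`, weak efficiency makes `gph F`
disjoint from `Ω × (ȳ - t e - K)`. Minimizing `‖a - b‖ + ‖a - (x_j, y_j)‖²` over pairs of points
`a, b` of these two sets (in the `ℓ²` product, so that squared norms split over the factors) gives
a unit proximal normal `ξ` to the second set at `b` and a proximal normal to the graph at `a`
equal to `-ξ - 2 (a - (x_j, y_j))`; both points are close to `(x_j, y_j)`, the `Ω`-component of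
`ξ` is normal to `Ω` and its `K`-component lies in `K⁺`. Letting `t → 0`, `j → ∞` along a
subsequence on which `ξ → (u, c)` gives `(-u, -c) ∈ N_{gph F}(∞, ȳ)` and `u ∈ N_Ω(∞)` with
`‖(u, c)‖ = 1`, and the constraint qualification excludes `c = 0`.
-/

open Filter Topology Set Metric Pointwise
open scoped RealInnerProductSpace ENNReal

noncomputable section

variable {E F G : Type*}
  [NormedAddCommGroup E] [InnerProductSpace ℝ E]
  [NormedAddCommGroup F] [InnerProductSpace ℝ F]
  [NormedAddCommGroup G] [InnerProductSpace ℝ G]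

def proximalNormalCone (A : Set E) (a : E) : Set E :=
  {ξ | a ∈ A ∧ ∃ C ≥ (0 : ℝ), ∀ a' ∈ A, ⟪ξ, a' - a⟫ ≤ C * ‖a' - a‖ ^ 2}

lemma inner_sub_le_norm_mul_sub_add (x y z : E) :
    ⟪x - z, x - y⟫ ≤ ‖x - z‖ * (‖x - z‖ - ‖y - z‖) + ‖x - y‖ ^ 2 / 2 := by
  have h : ‖y - z‖ ^ 2 = ‖x - z‖ ^ 2 - 2 * ⟪x - z, x - y⟫ + ‖x - y‖ ^ 2 := by
    rw [← norm_sub_sq_real, sub_sub_sub_cancel_left]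
  nlinarith [sq_nonneg (‖x - z‖ - ‖y - z‖)]

lemma neg_mem_proximalNormalCone_of_isMinOn {A : Set E} {x z x₀ : E} {ρ : ℝ} (hρ : 0 ≤ ρ)
    (hx : x ∈ A) (hxz : x ≠ z) (hmin : IsMinOn (fun y => ‖y - z‖ + ρ * ‖y - x₀‖ ^ 2) A x) :
    -(‖x - z‖⁻¹ • (x - z) + (2 * ρ) • (x - x₀)) ∈ proximalNormalCone A x := by
  have hs : 0 < ‖x - z‖ := norm_pos_iff.mpr (sub_ne_zero.mpr hxz)
  refine ⟨hx, ρ + ‖x - z‖⁻¹ / 2, by positivity, fun y hy => ?_⟩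
  have hxy : ‖x - z‖ + ρ * ‖x - x₀‖ ^ 2 ≤ ‖y - z‖ + ρ * ‖y - x₀‖ ^ 2 := hmin hy
  have hy₀ : ‖y - x₀‖ ^ 2 = ‖x - x₀‖ ^ 2 - 2 * ⟪x - x₀, x - y⟫ + ‖x - y‖ ^ 2 := by
    rw [← norm_sub_sq_real, sub_sub_sub_cancel_left]
  have hkey :=
    mul_le_mul_of_nonneg_left (inner_sub_le_norm_mul_sub_add x y z) (inv_nonneg.mpr hs.le)
  rw [mul_add, ← mul_assoc, inv_mul_cancel₀ hs.ne', one_mul] at hkey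
  rw [← neg_sub x y, inner_neg_neg, inner_add_left, real_inner_smul_left, real_inner_smul_left,
    norm_neg]
  nlinarith

/-- The points are a minimizer of `‖a - b‖ + ‖a - a₀‖²` over `A × B`. -/
theorem exists_proximalNormalCone_of_disjoint [ProperSpace E] {A B : Set E} (hA : IsClosed A)
    (hB : IsClosed B) (hAB : Disjoint A B) {a₀ b₀ : E} (ha₀ : a₀ ∈ A) (hb₀ : b₀ ∈ B) :
    ∃ a b ξ η : E, ξ ∈ proximalNormalCone B b ∧ η ∈ proximalNormalCone A a ∧ ‖ξ‖ = 1 ∧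
      ‖a - a₀‖ ^ 2 ≤ ‖a₀ - b₀‖ ∧ ‖a - b‖ ≤ ‖a₀ - b₀‖ ∧ ξ + η = -(2 : ℝ) • (a - a₀) := by
  set f : E × E → ℝ := fun p => ‖p.1 - p.2‖ + ‖p.1 - a₀‖ ^ 2
  have hf : Continuous f := by fun_prop
  have hcoercive : Tendsto f (cocompact (E × E)) atTop := by
    refine tendsto_atTop_mono (fun p => ?_)
      (tendsto_atTop_add_const_right _ (-(1 + ‖a₀‖)) tendsto_norm_cocompact_atTop)
    have h₁ : ‖p.1‖ ≤ ‖a₀‖ + ‖p.1 - a₀‖ := norm_le_norm_add_norm_sub' _ _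
    have h₂ : ‖p.2‖ ≤ ‖p.1‖ + ‖p.1 - p.2‖ := norm_le_norm_add_norm_sub _ _
    have h₃ : ‖p.1 - a₀‖ ≤ ‖p.1 - a₀‖ ^ 2 + 1 := by nlinarith [sq_nonneg (‖p.1 - a₀‖ - 1)]
    have : ‖p‖ ≤ f p + (1 + ‖a₀‖) :=
      max_le (by linarith [norm_nonneg (p.1 - p.2)]) (by linarith)
    linarith
  obtain ⟨⟨a, b⟩, ⟨ha, hb⟩, hmin⟩ := hf.continuousOn.exists_isMinOn' (hA.prod hB)
    (mk_mem_prod ha₀ hb₀) ((hcoercive.eventually_ge_atTop _).filter_mono inf_le_left)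
  have hab : a ≠ b := hAB.ne_of_mem ha hb
  have hbound : ‖a - b‖ + ‖a - a₀‖ ^ 2 ≤ ‖a₀ - b₀‖ := by
    simpa [f] using hmin (mk_mem_prod ha₀ hb₀)
  have hξ : ‖a - b‖⁻¹ • (a - b) ∈ proximalNormalCone B b := by
    have := neg_mem_proximalNormalCone_of_isMinOn (x₀ := b) le_rfl hb hab.symm
      (fun y hy => by simpa [f, norm_sub_rev a] using hmin (mk_mem_prod ha hy))
    rwa [norm_sub_rev, mul_zero, zero_smul, add_zero, ← smul_neg, neg_sub] at this
  have hη := neg_mem_proximalNormalCone_of_isMinOn (x₀ := a₀) zero_le_one ha hab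
    (fun y hy => by simpa [f] using hmin (mk_mem_prod hy hb))
  refine ⟨a, b, _, _, hξ, hη, ?_, by nlinarith [norm_nonneg (a - b)],
    by nlinarith [sq_nonneg ‖a - a₀‖], by module⟩
  rw [norm_smul, norm_inv, norm_norm, inv_mul_cancel₀ (norm_ne_zero_iff.mpr (sub_ne_zero.mpr hab))]

lemma eventually_le_mul_dist_of_le_mul_dist_sq {X : Type*} [PseudoMetricSpace X] {s : Set X}
    {p : X} {g : X → ℝ} {C : ℝ} (hC : 0 ≤ C) (h : ∀ q ∈ s, g q ≤ C * dist q p ^ 2) {ε : ℝ}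
    (hε : 0 < ε) : ∀ᶠ q in 𝓝[s] p, g q ≤ ε * dist q p := by
  filter_upwards [self_mem_nhdsWithin,
    mem_nhdsWithin_of_mem_nhds (ball_mem_nhds p (by positivity : 0 < ε / (C + 1)))] with q hq hqp
  have hd : dist q p * (C + 1) < ε := (lt_div_iff₀ (by positivity)).mp hqp
  nlinarith [h q hq, dist_nonneg (x := q) (y := p)]

lemma proximalNormalCone_subset_frechetNormalCone1 (Ω : Set E) (x : E) :
    proximalNormalCone Ω x ⊆ frechetNormalCone1 Ω x := by
  rintro ξ ⟨hx, C, hC, h⟩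
  refine ⟨hx, fun ε hε => ?_⟩
  simpa only [dist_eq_norm] using eventually_le_mul_dist_of_le_mul_dist_sq
    (g := fun x' => ⟪ξ, x' - x⟫) hC (fun q hq => by rw [dist_eq_norm]; exact h q hq) hε

lemma ofLp_mem_frechetNormalCone2 {Ω : Set (E × F)} {p ξ : WithLp 2 (E × F)}
    (hξ : ξ ∈ proximalNormalCone (WithLp.ofLp ⁻¹' Ω) p) :
    WithLp.ofLp ξ ∈ frechetNormalCone2 Ω (WithLp.ofLp p) := by
  obtain ⟨hp, C, hC, h⟩ := hξ
  refine ⟨hp, fun ε hε => ?_⟩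
  refine (eventually_le_mul_dist_of_le_mul_dist_sq (mul_nonneg zero_le_two hC)
    (fun q hq => ?_) hε).mono fun q hq => by rwa [dist_eq_norm] at hq
  have hq' := h (WithLp.toLp 2 q) hq
  rw [WithLp.prod_inner_apply, WithLp.prod_norm_sq_eq_of_L2] at hq'
  simp only [WithLp.ofLp_sub, WithLp.sub_fst, WithLp.sub_snd, WithLp.toLp_fst, WithLp.toLp_snd,
    Prod.fst_sub, Prod.snd_sub, WithLp.ofLp_fst, WithLp.ofLp_snd] at hq' ⊢
  have h₁ : ‖q.1 - p.fst‖ ≤ dist q (WithLp.ofLp p) := by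
    simpa [dist_eq_norm] using norm_fst_le (q - WithLp.ofLp p)
  have h₂ : ‖q.2 - p.snd‖ ≤ dist q (WithLp.ofLp p) := by
    simpa [dist_eq_norm] using norm_snd_le (q - WithLp.ofLp p)
  have hsq : ‖q.1 - p.fst‖ ^ 2 + ‖q.2 - p.snd‖ ^ 2 ≤ 2 * dist q (WithLp.ofLp p) ^ 2 := by
    nlinarith [norm_nonneg (q.1 - p.fst), norm_nonneg (q.2 - p.snd)]
  nlinarith [mul_le_mul_of_nonneg_left hsq hC]

lemma fst_mem_proximalNormalCone {s : Set E} {t : Set F} {p ξ : WithLp 2 (E × F)}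
    (hξ : ξ ∈ proximalNormalCone (WithLp.ofLp ⁻¹' s ×ˢ t) p) :
    ξ.fst ∈ proximalNormalCone s p.fst := by
  obtain ⟨⟨hp₁, hp₂⟩, C, hC, h⟩ := hξ
  refine ⟨hp₁, C, hC, fun x hx => ?_⟩
  simpa [WithLp.prod_inner_apply, WithLp.prod_norm_sq_eq_of_L2] using
    h (WithLp.toLp 2 (x, p.snd)) ⟨hx, hp₂⟩

lemma snd_mem_proximalNormalCone {s : Set E} {t : Set F} {p ξ : WithLp 2 (E × F)}
    (hξ : ξ ∈ proximalNormalCone (WithLp.ofLp ⁻¹' s ×ˢ t) p) :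
    ξ.snd ∈ proximalNormalCone t p.snd := by
  obtain ⟨⟨hp₁, hp₂⟩, C, hC, h⟩ := hξ
  refine ⟨hp₂, C, hC, fun y hy => ?_⟩
  simpa [WithLp.prod_inner_apply, WithLp.prod_norm_sq_eq_of_L2] using
    h (WithLp.toLp 2 (p.fst, y)) ⟨hp₁, hy⟩

lemma Convex.add_mem_of_pos_smul_mem {V : Type*} [AddCommGroup V] [Module ℝ V] {K : Set V}
    (hKconv : Convex ℝ K) (hKcone : ∀ t : ℝ, 0 < t → ∀ y ∈ K, t • y ∈ K) {a b : V} (ha : a ∈ K)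
    (hb : b ∈ K) : a + b ∈ K := by
  convert hKcone 2 two_pos _ (hKconv ha hb (by norm_num : (0 : ℝ) ≤ 1 / 2)
    (by norm_num : (0 : ℝ) ≤ 1 / 2) (by norm_num)) using 1
  module

lemma Convex.smul_add_mem_interior {V : Type*} [AddCommGroup V] [Module ℝ V] [TopologicalSpace V]
    [IsTopologicalAddGroup V] [ContinuousConstSMul ℝ V] {K : Set V} (hKconv : Convex ℝ K)
    (hKcone : ∀ t : ℝ, 0 < t → ∀ y ∈ K, t • y ∈ K) {e k : V} (he : e ∈ interior K) (hk : k ∈ K)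
    {t : ℝ} (ht : 0 < t) : t • e + k ∈ interior K := by
  have hsub : t • interior K + {k} ⊆ K := by
    rintro _ ⟨_, ⟨v, hv, rfl⟩, _, rfl, rfl⟩
    exact hKconv.add_mem_of_pos_smul_mem hKcone (hKcone t ht v (interior_subset hv)) hk
  exact interior_maximal hsub (isOpen_interior.smul₀ ht.ne').add_right
    ⟨t • e, smul_mem_smul_set he, k, rfl, rfl⟩

lemma inner_nonneg_of_mem_proximalNormalCone {K : Set F} (hKconv : Convex ℝ K)
    (hKcone : ∀ t : ℝ, 0 < t → ∀ y ∈ K, t • y ∈ K) {c w ξ : F}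
    (hξ : ξ ∈ proximalNormalCone {v | c - v ∈ K} w) {k : F} (hk : k ∈ K) : 0 ≤ ⟪ξ, k⟫ := by
  obtain ⟨hw, C, hC, h⟩ := hξ
  have hσ : ∀ σ > (0 : ℝ), -⟪ξ, k⟫ ≤ C * ‖k‖ ^ 2 * σ := by
    intro σ hσ
    have hmem : c - (w - σ • k) ∈ K := by
      rw [sub_sub_eq_add_sub, add_sub_right_comm]
      exact hKconv.add_mem_of_pos_smul_mem hKcone hw (hKcone σ hσ k hk)
    have := h _ hmem
    rw [sub_sub_cancel_left, inner_neg_right, real_inner_smul_right, norm_neg, norm_smul,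
      Real.norm_of_nonneg hσ.le] at this
    nlinarith
  have hlim : Tendsto (fun σ : ℝ => C * ‖k‖ ^ 2 * σ) (𝓝[>] 0) (𝓝 0) := by
    simpa using ((continuous_const_mul (C * ‖k‖ ^ 2)).tendsto 0).mono_left nhdsWithin_le_nhds
  linarith [ge_of_tendsto hlim (eventually_nhdsWithin_of_forall hσ)]

lemma disjoint_svGraph_prod {X V : Type*} [AddCommGroup V] [Module ℝ V] [TopologicalSpace V]
    [IsTopologicalAddGroup V] [ContinuousConstSMul ℝ V] {S : X → Set V} {Ω : Set X} {K : Set V}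
    (hKconv : Convex ℝ K) (hKcone : ∀ t : ℝ, 0 < t → ∀ y ∈ K, t • y ∈ K) {e ybar : V}
    (he : e ∈ interior K) (hweak : ∀ z ∈ interior K, ybar - z ∉ ⋃ x ∈ Ω, S x) {t : ℝ} (ht : 0 < t) :
    Disjoint (svGraph S) (Ω ×ˢ {w | ybar - t • e - w ∈ K}) := by
  rw [Set.disjoint_left]
  rintro ⟨x, y⟩ hy ⟨hx, hk⟩
  apply hweak _ (hKconv.smul_add_mem_interior hKcone he hk ht)
  rw [show ybar - (t • e + (ybar - t • e - y)) = y by abel]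
  exact mem_biUnion hx hy

/-- `‖y₀ - ybar + (2 * t) • e‖` is the distance from `(x₀, y₀)` to the point
`(x₀, ybar - (2 * t) • e)` of `Ω × (ybar - t • e - K)`. -/
theorem exists_fuzzy_normals [FiniteDimensional ℝ E] [FiniteDimensional ℝ F] {S : E → Set F}
    (hS : IsClosed (svGraph S)) {Ω : Set E} (hΩ : IsClosed Ω) {K : Set F}
    (hKcone : ∀ t : ℝ, 0 < t → ∀ y ∈ K, t • y ∈ K) (hKconv : Convex ℝ K) (hKclosed : IsClosed K)
    {e ybar : F} (he : e ∈ interior K) (hweak : ∀ z ∈ interior K, ybar - z ∉ ⋃ x ∈ Ω, S x)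
    {x₀ : E} {y₀ : F} (hx₀ : x₀ ∈ Ω) (hy₀ : y₀ ∈ S x₀) {t : ℝ} (ht : 0 < t) :
    ∃ a b ξ η : WithLp 2 (E × F), ξ.fst ∈ frechetNormalCone1 Ω b.fst ∧
      (∀ k ∈ K, 0 ≤ ⟪ξ.snd, k⟫) ∧ WithLp.ofLp η ∈ frechetNormalCone2 (svGraph S) (WithLp.ofLp a) ∧
      ‖ξ‖ = 1 ∧ ‖a - WithLp.toLp 2 (x₀, y₀)‖ ^ 2 ≤ ‖y₀ - ybar + (2 * t) • e‖ ∧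
      ‖a - b‖ ≤ ‖y₀ - ybar + (2 * t) • e‖ ∧ ξ + η = -(2 : ℝ) • (a - WithLp.toLp 2 (x₀, y₀)) := by
  have hA : IsClosed (WithLp.ofLp ⁻¹' svGraph S : Set (WithLp 2 (E × F))) :=
    hS.preimage (WithLp.prod_continuous_ofLp 2 E F)
  have hB :
      IsClosed (WithLp.ofLp ⁻¹' Ω ×ˢ {w | ybar - t • e - w ∈ K} : Set (WithLp 2 (E × F))) :=
    (hΩ.prod (hKclosed.preimage (by fun_prop))).preimage (WithLp.prod_continuous_ofLp 2 E F)
  have hb₀ : WithLp.toLp 2 (x₀, ybar - (2 * t) • e) ∈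
      (WithLp.ofLp ⁻¹' Ω ×ˢ {w | ybar - t • e - w ∈ K} : Set (WithLp 2 (E × F))) := by
    refine ⟨hx₀, show ybar - t • e - (ybar - (2 * t) • e) ∈ K from ?_⟩
    convert hKcone t ht e (interior_subset he) using 1
    module
  obtain ⟨a, b, ξ, η, hξ, hη, hξ1, ha, hab, hsum⟩ := exists_proximalNormalCone_of_disjoint hA hB
    ((disjoint_svGraph_prod hKconv hKcone he hweak ht).preimage _) (a₀ := WithLp.toLp 2 (x₀, y₀))
    hy₀ hb₀
  have hδ : ‖WithLp.toLp 2 (x₀, y₀) - WithLp.toLp 2 (x₀, ybar - (2 * t) • e)‖ =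
      ‖y₀ - ybar + (2 * t) • e‖ := by
    rw [← WithLp.toLp_sub, Prod.mk_sub_mk, sub_self, WithLp.norm_toLp_snd, sub_sub_eq_add_sub,
      add_sub_right_comm]
  rw [hδ] at ha hab
  exact ⟨a, b, ξ, η,
    proximalNormalCone_subset_frechetNormalCone1 _ _ (fst_mem_proximalNormalCone hξ),
    fun k => inner_nonneg_of_mem_proximalNormalCone hKconv hKcone (snd_mem_proximalNormalCone hξ),
    ofLp_mem_frechetNormalCone2 hη, hξ1, ha, hab, hsum⟩

lemma exists_seq_mem_svGraph_tendsto {X Y : Type*} [NormedAddCommGroup X] [ProperSpace X]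
    [TopologicalSpace Y] [FrechetUrysohnSpace Y] {S : X → Set Y} (hS : IsClosed (svGraph S))
    {Ω : Set X} (hΩ : IsClosed Ω) {ybar : Y}
    (hybar : ybar ∈ closure (⋃ x ∈ Ω, S x) \ ⋃ x ∈ Ω, S x) :
    ∃ (x : ℕ → X) (y : ℕ → Y), (∀ j, x j ∈ Ω) ∧ (∀ j, y j ∈ S (x j)) ∧
      Tendsto (fun j => ‖x j‖) atTop atTop ∧ Tendsto y atTop (𝓝 ybar) := by
  obtain ⟨hcl, hnot⟩ := hybar
  obtain ⟨y, hyΩ, hy⟩ := mem_closure_iff_seq_limit.mp hcl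
  simp only [mem_iUnion, exists_prop] at hyΩ
  choose x hxΩ hxy using hyΩ
  refine ⟨x, y, hxΩ, hxy, tendsto_atTop.mpr fun M => ?_, hy⟩
  by_contra hM
  obtain ⟨φ, hφ, hφM⟩ := extraction_of_frequently_atTop (not_eventually.mp hM)
  obtain ⟨xbar, -, ψ, hψ, hx⟩ := (isCompact_closedBall (0 : X) M).tendsto_subseq
    fun i => mem_closedBall_zero_iff.mpr (not_le.mp (hφM i)).le
  have hgraph : (xbar, ybar) ∈ svGraph S := hS.mem_of_tendsto
    (hx.prodMk_nhds (hy.comp (hφ.comp hψ).tendsto_atTop)) (Eventually.of_forall fun i => hxy _)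
  exact hnot (mem_biUnion (hΩ.mem_of_tendsto hx (Eventually.of_forall fun i => hxΩ _)) hgraph)

lemma tendsto_norm_atTop_of_tendsto_sub {ι V : Type*} [SeminormedAddCommGroup V] {l : Filter ι}
    {u v : ι → V} (hu : Tendsto (fun i => ‖u i‖) l atTop)
    (huv : Tendsto (fun i => v i - u i) l (𝓝 0)) : Tendsto (fun i => ‖v i‖) l atTop := by
  refine tendsto_atTop_mono (fun i => ?_) (hu.atTop_add huv.norm.neg)
  linarith [norm_le_norm_add_norm_sub' (u i) (v i), norm_sub_rev (u i) (v i)]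

theorem exists_normal_at_infty [FiniteDimensional ℝ E] [FiniteDimensional ℝ F] {S : E → Set F}
    (hS : IsClosed (svGraph S)) {Ω : Set E} (hΩ : IsClosed Ω) {K : Set F}
    (hKcone : ∀ t : ℝ, 0 < t → ∀ y ∈ K, t • y ∈ K) (hKconv : Convex ℝ K) (hKclosed : IsClosed K)
    {e ybar : F} (he : e ∈ interior K) (hweak : ∀ z ∈ interior K, ybar - z ∉ ⋃ x ∈ Ω, S x)
    {x : ℕ → E} {y : ℕ → F} (hxΩ : ∀ j, x j ∈ Ω) (hxy : ∀ j, y j ∈ S (x j))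
    (hx : Tendsto (fun j => ‖x j‖) atTop atTop) (hy : Tendsto y atTop (𝓝 ybar)) :
    ∃ ξ : E × F, ξ ≠ 0 ∧ -ξ ∈ normalConeAtInfty (svGraph S) ybar ∧
      ξ.1 ∈ normalConeAtInfty1 Ω ∧ ∀ k ∈ K, 0 ≤ ⟪ξ.2, k⟫ := by
  choose a b ξ η hξΩ hξK hη hξ1 ha hab hsum using fun j : ℕ =>
    exists_fuzzy_normals hS hΩ hKcone hKconv hKclosed he hweak (hxΩ j) (hxy j)
      (Nat.one_div_pos_of_nat (n := j))
  have hδ : Tendsto (fun j : ℕ => ‖y j - ybar + (2 * (1 / ((j : ℝ) + 1))) • e‖) atTop (𝓝 0) := by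
    have ht : Tendsto (fun j : ℕ => 2 * (1 / ((j : ℝ) + 1))) atTop (𝓝 0) := by
      simpa using tendsto_one_div_add_atTop_nhds_zero_nat.const_mul (2 : ℝ)
    simpa using ((tendsto_sub_nhds_zero_iff.mpr hy).add (ht.smul_const e)).norm
  have ha₀ : Tendsto (fun j => a j - WithLp.toLp 2 (x j, y j)) atTop (𝓝 0) :=
    squeeze_zero_norm (fun j => (Real.le_sqrt (norm_nonneg _) (norm_nonneg _)).mpr (ha j))
      (by simpa using hδ.sqrt)
  have hba : Tendsto (fun j => b j - a j) atTop (𝓝 0) :=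
    squeeze_zero_norm (fun j => (norm_sub_rev _ _).trans_le (hab j)) hδ
  obtain ⟨ξ₀, hξ₀, φ, hφ, hξlim⟩ := (isCompact_sphere (0 : WithLp 2 (E × F)) 1).tendsto_subseq
    fun j => mem_sphere_zero_iff_norm.mpr (hξ1 j)
  have hηlim : Tendsto (η ∘ φ) atTop (𝓝 (-ξ₀)) := by
    have := ((ha₀.comp hφ.tendsto_atTop).const_smul (-(2 : ℝ))).sub hξlim
    rw [smul_zero, zero_sub] at this
    exact this.congr fun i => by simp [← hsum (φ i)]
  have hφ' := hφ.tendsto_atTop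
  have hfst := (WithLp.continuous_fst 2 E F).tendsto (0 : WithLp 2 (E × F))
  have hsnd := (WithLp.continuous_snd 2 E F).tendsto (0 : WithLp 2 (E × F))
  refine ⟨WithLp.ofLp ξ₀, fun h => ?_, ?_, ?_, fun k hk => ?_⟩
  · rw [WithLp.ofLp_eq_zero] at h
    simp [h] at hξ₀
  · refine ⟨fun i => WithLp.ofLp (a (φ i)), fun i => WithLp.ofLp (η (φ i)), fun i => (hη _).1,
      tendsto_norm_atTop_of_tendsto_sub (hx.comp hφ') ?_, ?_, fun i => hη _, ?_⟩
    · simpa [Function.comp_def] using hfst.comp (ha₀.comp hφ')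
    · simpa [Function.comp_def] using (hy.comp hφ').add (hsnd.comp (ha₀.comp hφ'))
    · simpa [Function.comp_def] using ((WithLp.prod_continuous_ofLp 2 E F).tendsto _).comp hηlim
  · refine ⟨fun i => (b (φ i)).fst, fun i => (ξ (φ i)).fst, fun i => (hξΩ _).1,
      tendsto_norm_atTop_of_tendsto_sub (hx.comp hφ') ?_, fun i => hξΩ _,
      ((WithLp.continuous_fst 2 E F).tendsto _).comp hξlim⟩
    have hb₀ : Tendsto (fun j => b j - WithLp.toLp 2 (x j, y j)) atTop (𝓝 0) := by
      simpa using hba.add ha₀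
    simpa [Function.comp_def] using hfst.comp (hb₀.comp hφ')
  · exact ge_of_tendsto ((((WithLp.continuous_snd 2 E F).tendsto _).comp hξlim).inner
      tendsto_const_nhds) (Eventually.of_forall fun i => hξK _ k hk)

theorem stmt19_general {n m : ℕ} (S : Eucl n → Set (Eucl m)) (hS : IsClosed (svGraph S))
    (K : Set (Eucl m)) (Ω : Set (Eucl n))
    (hKcone : ∀ t : ℝ, 0 < t → ∀ y ∈ K, t • y ∈ K)
    (hKconv : Convex ℝ K) (hKclosed : IsClosed K)
    (hKint : (interior K).Nonempty)
    (hΩclosed : IsClosed Ω)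
    (ybar : Eucl m)
    (hybar : ybar ∈ closure (⋃ x ∈ Ω, S x) \ (⋃ x ∈ Ω, S x))
    (hweak : ∀ z ∈ interior K, ybar - z ∉ ⋃ x ∈ Ω, S x)
    (hcq : coderivAtInfty S ybar 0 ∩ (-(normalConeAtInfty1 Ω)) = ({0} : Set (Eucl n))) :
    ∃ c : Eucl m, c ≠ 0 ∧ (∀ y ∈ K, 0 ≤ ⟪c, y⟫) ∧
      (0 : Eucl n) ∈ coderivAtInfty S ybar c + normalConeAtInfty1 Ω := by
  obtain ⟨e, he⟩ := hKint
  obtain ⟨x, y, hxΩ, hxy, hx, hy⟩ := exists_seq_mem_svGraph_tendsto hS hΩclosed hybar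
  obtain ⟨ξ, hξ, hgraph, hΩ, hK⟩ :=
    exists_normal_at_infty hS hΩclosed hKcone hKconv hKclosed he hweak hxΩ hxy hx hy
  have hcoderiv : -ξ.1 ∈ coderivAtInfty S ybar ξ.2 := hgraph
  refine ⟨ξ.2, fun hc => hξ ?_, hK, -ξ.1, hcoderiv, ξ.1, hΩ, neg_add_cancel _⟩
  have hmem : -ξ.1 ∈ coderivAtInfty S ybar 0 ∩ -normalConeAtInfty1 Ω :=
    ⟨by rwa [hc] at hcoderiv, by rwa [Set.mem_neg, neg_neg]⟩
  rw [hcq, mem_singleton_iff, neg_eq_zero] at hmem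
  exact Prod.ext hmem hc

/-- Fermat's rule at infinity for set-valued optimization. -/
theorem stmt19 {n m : ℕ} (S : Eucl n → Set (Eucl m)) (hS : IsClosed (svGraph S))
    (K : Set (Eucl m)) (Ω : Set (Eucl n))
    (hKne : K ≠ univ)
    (hKcone : ∀ t : ℝ, 0 < t → ∀ y ∈ K, t • y ∈ K)
    (hKconv : Convex ℝ K) (hKclosed : IsClosed K)
    (hKpointed : K ∩ (-K) = {0})
    (hKint : (interior K).Nonempty)
    (hΩclosed : IsClosed Ω) (hΩunbdd : ¬ Bornology.IsBounded Ω)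
    (ybar : Eucl m)
    (hybar : ybar ∈ closure (⋃ x ∈ Ω, S x) \ (⋃ x ∈ Ω, S x))
    (hweak : ∀ z ∈ interior K, ybar - z ∉ ⋃ x ∈ Ω, S x)
    (hcq : coderivAtInfty S ybar 0 ∩ (-(normalConeAtInfty1 Ω)) = ({0} : Set (Eucl n))) :
    ∃ c : Eucl m, c ≠ 0 ∧ (∀ y ∈ K, 0 ≤ ⟪c, y⟫) ∧
      (0 : Eucl n) ∈ coderivAtInfty S ybar c + normalConeAtInfty1 Ω :=
  stmt19_general S hS K Ω hKcone hKconv hKclosed hKint hΩclosed ybar hybar hweak hcq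
end
end
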